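/- Suppose 0 < γ < γ̄ where γ̄ = (8/25)·μ / (K·L·(μ + L)). Then the IAG iterates converge globally linearly: there exists r ∈ [0, 1) such that dist_k ≤ r^k · dist_0 for all k ≥ 0. -/

import Mathlib

/-!
An IAG step is an exact gradient step plus a delay error:
`x (k+1) - x* = (x k - x* - γ ∇f (x k)) - γ (g k - ∇f (x k))`.
Strong monotonicity and Lipschitz continuity of `∇f` make the exact step contract the distance by
`1 - (21/25) γμ` once `γL² ≤ (8/25) μ`. The delay error is at most `L` times the drift of the
iterates over the last `K` steps, hence at most `γ K L²` times the distance of an iterate at most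
`2K` steps old. Induction on `‖x j - x*‖ ≤ r ^ j ‖x 0 - x*‖` with `r = 1 - (2/5) γμ` then closes:
the stepsize bound makes `r ^ (2K) ≥ 8/11`, so the error costs at most `(11/25) γμ r ^ k ‖x 0 - x*‖`.
-/

open Set Finset InnerProductSpace
open scoped RealInnerProductSpace Gradient

section FirstOrder

variable {E : Type*} [NormedAddCommGroup E] [NormedSpace ℝ E]

theorem ConvexOn.add_fderiv_sub_le {φ : E → ℝ} (hφ : ConvexOn ℝ univ φ) {z : E}
    (hz : DifferentiableAt ℝ φ z) (y : E) : φ z + fderiv ℝ φ z (y - z) ≤ φ y := by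
  let ℓ : ℝ →ᵃ[ℝ] E := AffineMap.lineMap z y
  have hline : HasDerivAt (φ ∘ ℓ) (fderiv ℝ φ z (y - z)) 0 := by
    refine HasFDerivAt.comp_hasDerivAt _ ?_ AffineMap.hasDerivAt_lineMap
    simpa [ℓ] using hz.hasFDerivAt
  have hslope := (hφ.comp_affineMap ℓ).le_slope_of_hasDerivAt
    (mem_univ 0) (mem_univ 1) one_pos hline
  simp only [slope_def_field, Function.comp_apply, ℓ, AffineMap.lineMap_apply_zero,
    AffineMap.lineMap_apply_one, sub_zero, div_one] at hslope
  linarith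

theorem ConvexOn.fderiv_sub_fderiv_nonneg {φ : E → ℝ} (hφ : ConvexOn ℝ univ φ)
    (hd : Differentiable ℝ φ) (y z : E) : 0 ≤ fderiv ℝ φ y (y - z) - fderiv ℝ φ z (y - z) := by
  have hyz := hφ.add_fderiv_sub_le (hd z) y
  have hzy := hφ.add_fderiv_sub_le (hd y) z
  rw [← neg_sub, map_neg] at hzy
  linarith

end FirstOrder

section Gradient

variable {E : Type*} [NormedAddCommGroup E] [InnerProductSpace ℝ E] [CompleteSpace E]

theorem gradient_fun_sum {ι : Type*} {s : Finset ι} {f : ι → E → ℝ} {x : E}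
    (hf : ∀ i ∈ s, DifferentiableAt ℝ (f i) x) :
    ∇ (fun y => ∑ i ∈ s, f i y) x = ∑ i ∈ s, ∇ (f i) x := by
  refine HasGradientAt.gradient ?_
  rw [hasGradientAt_iff_hasFDerivAt, map_sum]
  exact HasFDerivAt.fun_sum fun i hi => (hf i hi).hasGradientAt

theorem mul_norm_sub_sq_le_inner_gradient_sub {F : E → ℝ} (hF : Differentiable ℝ F) {μ : ℝ}
    (hsc : ConvexOn ℝ univ (fun y => F y - μ / 2 * ‖y‖ ^ 2)) (y z : E) :
    μ * ‖y - z‖ ^ 2 ≤ ⟪∇ F y - ∇ F z, y - z⟫ := by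
  have hderiv : ∀ w, fderiv ℝ (fun y => F y - μ / 2 * ‖y‖ ^ 2) w (y - z) =
      ⟪∇ F w, y - z⟫ - μ * ⟪w, y - z⟫ := by
    intro w
    have h : HasFDerivAt (fun y => F y - μ / 2 * ‖y‖ ^ 2) _ w := (hF w).hasFDerivAt.sub
      ((hasStrictFDerivAt_norm_sq w).hasFDerivAt.const_mul (μ / 2))
    rw [h.fderiv]
    simp only [sub_apply, smul_apply, coe_innerSL_apply, inner_gradient_left, nsmul_eq_mul,
      smul_eq_mul]
    ring
  have hmono := hsc.fderiv_sub_fderiv_nonneg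
    (hF.sub ((differentiable_id.norm_sq ℝ).const_mul _)) y z
  rw [hderiv, hderiv] at hmono
  have hsq : ‖y - z‖ ^ 2 = ⟪y, y - z⟫ - ⟪z, y - z⟫ := by
    rw [← inner_sub_left, real_inner_self_eq_norm_sq]
  rw [hsq, inner_sub_left]
  linarith

end Gradient

theorem norm_sum_sub_le_of_lipschitz {ι E : Type*} [Fintype ι] [SeminormedAddCommGroup E]
    {G : ι → E → E} {Li : ι → ℝ} (hLi : ∀ i, 0 ≤ Li i)
    (hG : ∀ i y z, ‖G i y - G i z‖ ≤ Li i * ‖y - z‖) {y : ι → E} {z : E} {c : ℝ}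
    (hc : ∀ i, ‖y i - z‖ ≤ c) : ‖∑ i, G i (y i) - ∑ i, G i z‖ ≤ (∑ i, Li i) * c := by
  rw [← sum_sub_distrib, sum_mul]
  exact (norm_sum_le _ _).trans <| sum_le_sum fun i _ =>
    (hG i _ _).trans (mul_le_mul_of_nonneg_left (hc i) (hLi i))

theorem norm_sub_smul_sq_le {E : Type*} [NormedAddCommGroup E] [InnerProductSpace ℝ E]
    {u v : E} {μ L γ : ℝ} (hγ : 0 ≤ γ) (hmono : μ * ‖u‖ ^ 2 ≤ ⟪v, u⟫) (hlip : ‖v‖ ≤ L * ‖u‖) :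
    ‖u - γ • v‖ ^ 2 ≤ (1 - 2 * γ * μ + γ ^ 2 * L ^ 2) * ‖u‖ ^ 2 := by
  have hv : ‖v‖ ^ 2 ≤ L ^ 2 * ‖u‖ ^ 2 := by
    rw [← mul_pow]; exact pow_le_pow_left₀ (norm_nonneg v) hlip 2
  rw [norm_sub_sq_real, inner_smul_right, norm_smul, mul_pow, Real.norm_eq_abs, sq_abs,
    real_inner_comm]
  nlinarith [mul_le_mul_of_nonneg_left hmono hγ, mul_le_mul_of_nonneg_left hv (sq_nonneg γ)]

section IAG

variable {ι E : Type*} [Fintype ι] [NormedAddCommGroup E]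
  {G : ι → E → E} {Li : ι → ℝ} {τ : ι → ℕ → ℕ} {x : ℕ → E} {K : ℕ} {xs : E} {μ γ : ℝ}

def aggregatedGradient (G : ι → E → E) (τ : ι → ℕ → ℕ) (x : ℕ → E) (k : ℕ) : E :=
  ∑ i, G i (x (τ i k))

theorem norm_aggregatedGradient_le (hLi : ∀ i, 0 ≤ Li i)
    (hG : ∀ i y z, ‖G i y - G i z‖ ≤ Li i * ‖y - z‖) (hxs : ∑ i, G i xs = 0) {l : ℕ}
    (hτ : ∀ i, l - K ≤ τ i l ∧ τ i l ≤ l) {ρ : ℕ → ℝ} (hρ : Antitone ρ)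
    (hx : ∀ j ≤ l, ‖x j - xs‖ ≤ ρ j) :
    ‖aggregatedGradient G τ x l‖ ≤ (∑ i, Li i) * ρ (l - K) := by
  rw [aggregatedGradient, ← sub_zero (∑ i, _), ← hxs]
  exact norm_sum_sub_le_of_lipschitz hLi hG fun i => (hx _ (hτ i).2).trans (hρ (hτ i).1)

theorem norm_aggregatedGradient_sub_le (hLi : ∀ i, 0 ≤ Li i)
    (hG : ∀ i y z, ‖G i y - G i z‖ ≤ Li i * ‖y - z‖) {k : ℕ}
    (hτ : ∀ i, k - K ≤ τ i k ∧ τ i k ≤ k) {c : ℝ} (hc : 0 ≤ c)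
    (hstep : ∀ l, k - K ≤ l → l < k → ‖x (l + 1) - x l‖ ≤ c) :
    ‖aggregatedGradient G τ x k - ∑ i, G i (x k)‖ ≤ (∑ i, Li i) * (K * c) := by
  refine norm_sum_sub_le_of_lipschitz hLi hG fun i => ?_
  have hdrift : dist (x (τ i k)) (x k) ≤ ∑ _ ∈ Ico (τ i k) k, c :=
    dist_le_Ico_sum_of_dist_le (hτ i).2 fun h1 h2 => by
      rw [dist_comm, dist_eq_norm]; exact hstep _ ((hτ i).1.trans h1) h2
  rw [sum_const, Nat.card_Ico, nsmul_eq_mul, dist_eq_norm] at hdrift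
  have hdelay : k - τ i k ≤ K := by have := (hτ i).1; omega
  exact hdrift.trans (mul_le_mul_of_nonneg_right (by exact_mod_cast hdelay) hc)

theorem norm_sub_smul_sum_sub_le [InnerProductSpace ℝ E] (hLi : ∀ i, 0 ≤ Li i)
    (hG : ∀ i y z, ‖G i y - G i z‖ ≤ Li i * ‖y - z‖)
    (hmono : ∀ y z, μ * ‖y - z‖ ^ 2 ≤ ⟪∑ i, G i y - ∑ i, G i z, y - z⟫) (hγ : 0 ≤ γ)
    (hγL : γ * (∑ i, Li i) ^ 2 ≤ 8 / 25 * μ) (hγμ : γ * μ ≤ 25 / 21) (y z : E) :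
    ‖(y - z) - γ • (∑ i, G i y - ∑ i, G i z)‖ ≤ (1 - 21 / 25 * (γ * μ)) * ‖y - z‖ := by
  have hsq := norm_sub_smul_sq_le hγ (hmono y z)
    (norm_sum_sub_le_of_lipschitz (y := fun _ => y) hLi hG fun _ => le_rfl)
  refine le_of_pow_le_pow_left₀ two_ne_zero (by nlinarith [norm_nonneg (y - z)])
    (hsq.trans ?_)
  rw [mul_pow]
  refine mul_le_mul_of_nonneg_right ?_ (sq_nonneg _)
  have hγ2L2 : γ ^ 2 * (∑ i, Li i) ^ 2 ≤ 8 / 25 * (γ * μ) := by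
    nlinarith [mul_le_mul_of_nonneg_left hγL hγ]
  nlinarith [sq_nonneg (γ * μ)]

theorem norm_iag_succ_sub_le [InnerProductSpace ℝ E] (hLi : ∀ i, 0 ≤ Li i)
    (hG : ∀ i y z, ‖G i y - G i z‖ ≤ Li i * ‖y - z‖)
    (hmono : ∀ y z, μ * ‖y - z‖ ^ 2 ≤ ⟪∑ i, G i y - ∑ i, G i z, y - z⟫)
    (hxs : ∑ i, G i xs = 0) (hτ : ∀ i k, k - K ≤ τ i k ∧ τ i k ≤ k) (hγ : 0 < γ)
    (hγL : γ * K * (∑ i, Li i) ^ 2 ≤ 8 / 25 * μ) (hγμ : γ * μ ≤ 25 / 21) (hK : 1 ≤ K)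
    (hx : ∀ k, x (k + 1) = x k - γ • aggregatedGradient G τ x k)
    {ρ : ℕ → ℝ} (hρ : Antitone ρ) {k : ℕ} (hρk : ρ (k - 2 * K) ≤ 11 / 8 * ρ k)
    (hxk : ∀ j ≤ k, ‖x j - xs‖ ≤ ρ j) :
    ‖x (k + 1) - xs‖ ≤ (1 - 2 / 5 * (γ * μ)) * ρ k := by
  set L := ∑ i, Li i
  have hL : 0 ≤ L := sum_nonneg fun i _ => hLi i
  have hμ : 0 ≤ μ := by nlinarith [mul_nonneg (mul_nonneg hγ.le (Nat.cast_nonneg K)) (sq_nonneg L)]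
  have hγL' : γ * L ^ 2 ≤ 8 / 25 * μ := by
    nlinarith [mul_nonneg hγ.le (sq_nonneg L), (Nat.one_le_cast (α := ℝ)).2 hK]
  have hρ0 : 0 ≤ ρ (k - 2 * K) := (norm_nonneg _).trans (hxk _ (Nat.sub_le _ _))
  -- the gradients aggregated during the last `K` steps only see iterates from `k - 2K` on
  have hstep : ∀ l, k - K ≤ l → l < k → ‖x (l + 1) - x l‖ ≤ γ * (L * ρ (k - 2 * K)) := by
    intro l hkl hlk
    rw [hx l, sub_sub_cancel_left, norm_neg, norm_smul, Real.norm_of_nonneg hγ.le]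
    refine mul_le_mul_of_nonneg_left ((norm_aggregatedGradient_le hLi hG hxs (hτ · l) hρ
      fun j hj => hxk j (by omega)).trans (mul_le_mul_of_nonneg_left (hρ (by omega)) hL)) hγ.le
  have herr := norm_aggregatedGradient_sub_le hLi hG (hτ · k) (by positivity) hstep
  have hcontr := norm_sub_smul_sum_sub_le hLi hG hmono hγ.le hγL' hγμ (x k) xs
  have hdecomp : x (k + 1) - xs = ((x k - xs) - γ • (∑ i, G i (x k) - ∑ i, G i xs))
      - γ • (aggregatedGradient G τ x k - ∑ i, G i (x k)) := by
    rw [hx k, hxs]; module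
  have hdelay : γ * (L * (K * (γ * (L * ρ (k - 2 * K))))) ≤ 11 / 25 * (γ * μ) * ρ k := by
    calc γ * (L * (K * (γ * (L * ρ (k - 2 * K))))) = γ * K * L ^ 2 * (γ * ρ (k - 2 * K)) := by
          ring
      _ ≤ 8 / 25 * μ * (γ * (11 / 8 * ρ k)) := by gcongr
      _ = 11 / 25 * (γ * μ) * ρ k := by ring
  calc ‖x (k + 1) - xs‖
      ≤ ‖(x k - xs) - γ • (∑ i, G i (x k) - ∑ i, G i xs)‖
        + γ * ‖aggregatedGradient G τ x k - ∑ i, G i (x k)‖ := by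
        rw [hdecomp]
        exact (norm_sub_le _ _).trans_eq (by rw [norm_smul, Real.norm_of_nonneg hγ.le])
    _ ≤ (1 - 21 / 25 * (γ * μ)) * ρ k + 11 / 25 * (γ * μ) * ρ k :=
        add_le_add (hcontr.trans (mul_le_mul_of_nonneg_left (hxk k le_rfl) (by linarith)))
          ((mul_le_mul_of_nonneg_left herr hγ.le).trans hdelay)
    _ = (1 - 2 / 5 * (γ * μ)) * ρ k := by ring

theorem iag_norm_sub_le_pow [InnerProductSpace ℝ E] (hLi : ∀ i, 0 ≤ Li i)
    (hG : ∀ i y z, ‖G i y - G i z‖ ≤ Li i * ‖y - z‖)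
    (hmono : ∀ y z, μ * ‖y - z‖ ^ 2 ≤ ⟪∑ i, G i y - ∑ i, G i z, y - z⟫)
    (hxs : ∑ i, G i xs = 0) (hτ : ∀ i k, k - K ≤ τ i k ∧ τ i k ≤ k) (hγ : 0 < γ)
    (hγL : γ * K * (∑ i, Li i) ^ 2 ≤ 8 / 25 * μ) (hγμ : 25 * K * (γ * μ) ≤ 4) (hK : 1 ≤ K)
    (hx : ∀ k, x (k + 1) = x k - γ • aggregatedGradient G τ x k) (k : ℕ) :
    ‖x k - xs‖ ≤ (1 - 2 / 5 * (γ * μ)) ^ k * ‖x 0 - xs‖ := by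
  obtain ⟨r, hr⟩ : ∃ r, r = 1 - 2 / 5 * (γ * μ) := ⟨_, rfl⟩
  rw [← hr]
  have hK' : (1 : ℝ) ≤ K := Nat.one_le_cast.2 hK
  have hμ : 0 ≤ μ := by
    nlinarith [mul_nonneg (mul_nonneg hγ.le (Nat.cast_nonneg K)) (sq_nonneg (∑ i, Li i))]
  have ha : 0 ≤ γ * μ := mul_nonneg hγ.le hμ
  have ha' : γ * μ ≤ 4 / 25 := by nlinarith
  have hr0 : 0 ≤ r := by linarith
  have hr1 : r ≤ 1 := by linarith
  have hr2K : 8 / 11 ≤ r ^ (2 * K) := by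
    have hbern : 1 + (2 * K : ℕ) * -(2 / 5 * (γ * μ)) ≤ r ^ (2 * K) := by
      rw [hr, sub_eq_add_neg]; exact one_add_mul_le_pow (by linarith) (2 * K)
    push_cast at hbern
    nlinarith
  set ρ : ℕ → ℝ := fun j => r ^ j * ‖x 0 - xs‖
  have hρ : Antitone ρ := fun i j hij =>
    mul_le_mul_of_nonneg_right (pow_le_pow_of_le_one hr0 hr1 hij) (norm_nonneg _)
  induction k using Nat.strong_induction_on with
  | _ k ih =>
    rcases k with _ | k
    · simp
    have hρk : ρ (k - 2 * K) ≤ 11 / 8 * ρ k := by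
      have hpow : r ^ (k - 2 * K) * r ^ (2 * K) ≤ r ^ k := by
        rw [← pow_add]; exact pow_le_pow_of_le_one hr0 hr1 (by omega)
      have hpow' : r ^ (k - 2 * K) ≤ 11 / 8 * r ^ k := by
        nlinarith [mul_le_mul_of_nonneg_left hr2K (pow_nonneg hr0 (k - 2 * K))]
      simpa only [ρ, mul_assoc] using mul_le_mul_of_nonneg_right hpow' (norm_nonneg (x 0 - xs))
    calc ‖x (k + 1) - xs‖ ≤ r * ρ k := hr ▸
          norm_iag_succ_sub_le hLi hG hmono hxs hτ hγ hγL (by linarith) hK hx hρ hρk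
            fun j hj => ih j (by omega)
      _ = r ^ (k + 1) * ‖x 0 - xs‖ := by simp only [ρ]; ring

end IAG

theorem iag_stepsize_bounds {γ μ L K : ℝ} (hμ : 0 < μ) (hμL : μ ≤ L) (hK : 0 < K)
    (hγbar : γ < 8 / 25 * μ / (K * L * (μ + L))) :
    γ * K * L ^ 2 ≤ 8 / 25 * μ ∧ 25 * K * (γ * μ) ≤ 4 := by
  have hL : 0 < L := hμ.trans_le hμL
  have hden : 0 < L * (μ + L) := by positivity
  rw [lt_div_iff₀ (by positivity), mul_assoc K] at hγbar
  constructor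
  · nlinarith
  · have h2μ : 2 * μ ^ 2 ≤ L * (μ + L) := by nlinarith
    refine le_of_mul_le_mul_right ?_ hden
    nlinarith [mul_lt_mul_of_pos_left hγbar hμ]

theorem iag_global_linear_convergence_general
    (n m : ℕ)
    (f : Fin m → EuclideanSpace ℝ (Fin n) → ℝ)
    (Li : Fin m → ℝ) (hLi : ∀ i, 0 ≤ Li i)
    (L : ℝ) (hL : L = ∑ i, Li i)
    (hdiff : ∀ i, Differentiable ℝ (f i))
    (hlip : ∀ i y z, ‖gradient (f i) y - gradient (f i) z‖ ≤ Li i * ‖y - z‖)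
    (K : ℕ) (hK : 1 ≤ K)
    (τ : Fin m → ℕ → ℕ)
    (hτ : ∀ i k, k - K ≤ τ i k ∧ τ i k ≤ k)
    (F : EuclideanSpace ℝ (Fin n) → ℝ) (hF : F = fun y => ∑ i, f i y)
    (x g : ℕ → EuclideanSpace ℝ (Fin n))
    (hg : ∀ k, g k = ∑ i, gradient (f i) (x (τ i k)))
    (γ : ℝ) (hγ : 0 < γ)
    (hx : ∀ k, x (k + 1) = x k - γ • g k)
    (μ : ℝ) (hμ : 0 < μ) (hμL : μ ≤ L)
    (hsc : ConvexOn ℝ Set.univ (fun y => F y - μ / 2 * ‖y‖ ^ 2))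
    (xs : EuclideanSpace ℝ (Fin n))
    (hgxs : gradient F xs = 0)
    (hγbar : γ < (8 / 25) * μ / (K * L * (μ + L))) :
    ∃ r : ℝ, 0 ≤ r ∧ r < 1 ∧ ∀ k, ‖x k - xs‖ ≤ r ^ k * ‖x 0 - xs‖ := by
  obtain ⟨hγL, hγμ⟩ := iag_stepsize_bounds hμ hμL (Nat.cast_pos.2 hK) hγbar
  have hFgrad : ∀ y, ∇ F y = ∑ i, ∇ (f i) y := fun y => by
    rw [hF]; exact gradient_fun_sum fun i _ => (hdiff i).differentiableAt
  have hmono : ∀ y z, μ * ‖y - z‖ ^ 2 ≤ ⟪∑ i, ∇ (f i) y - ∑ i, ∇ (f i) z, y - z⟫ := by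
    intro y z
    rw [← hFgrad, ← hFgrad]
    exact mul_norm_sub_sq_le_inner_gradient_sub (hF ▸ Differentiable.fun_sum fun i _ => hdiff i)
      hsc y z
  have hK' : (1 : ℝ) ≤ K := Nat.one_le_cast.2 hK
  refine ⟨1 - 2 / 5 * (γ * μ), by nlinarith, by nlinarith [mul_pos hγ hμ], fun k => ?_⟩
  exact iag_norm_sub_le_pow hLi hlip hmono (hFgrad xs ▸ hgxs) hτ hγ (hL ▸ hγL) hγμ hK
    (fun k => by rw [hx, hg]; rfl) k

/-- Global linear convergence of the IAG method for stepsizes below the threshold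
`γ̄ = (8/25)μ/(KL(μ+L))`. -/
theorem iag_global_linear_convergence
    (n m : ℕ) (hm : 1 ≤ m)
    (f : Fin m → EuclideanSpace ℝ (Fin n) → ℝ)
    (Li : Fin m → ℝ) (hLi : ∀ i, 0 ≤ Li i)
    (L : ℝ) (hL : L = ∑ i, Li i)
    (hconv : ∀ i, ConvexOn ℝ Set.univ (f i))
    (hdiff : ∀ i, Differentiable ℝ (f i))
    (hlip : ∀ i y z, ‖gradient (f i) y - gradient (f i) z‖ ≤ Li i * ‖y - z‖)
    (K : ℕ) (hK : 1 ≤ K)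
    (τ : Fin m → ℕ → ℕ)
    (hτ : ∀ i k, k - K ≤ τ i k ∧ τ i k ≤ k)
    (hτ0 : ∀ i, τ i 0 = 0)
    (F : EuclideanSpace ℝ (Fin n) → ℝ) (hF : F = fun y => ∑ i, f i y)
    (x g e : ℕ → EuclideanSpace ℝ (Fin n))
    (hg : ∀ k, g k = ∑ i, gradient (f i) (x (τ i k)))
    (he : ∀ k, e k = g k - gradient F (x k))
    (γ : ℝ) (hγ : 0 < γ)
    (hx : ∀ k, x (k + 1) = x k - γ • g k)
    (μ : ℝ) (hμ : 0 < μ) (hμL : μ ≤ L)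
    (hsc : ConvexOn ℝ Set.univ (fun y => F y - μ / 2 * ‖y‖ ^ 2))
    (xs : EuclideanSpace ℝ (Fin n))
    (hmin : ∀ y, F xs ≤ F y) (hgxs : gradient F xs = 0)
    (hγbar : γ < (8 / 25) * μ / (K * L * (μ + L))) :
    ∃ r : ℝ, 0 ≤ r ∧ r < 1 ∧ ∀ k, ‖x k - xs‖ ≤ r ^ k * ‖x 0 - xs‖ :=
  iag_global_linear_convergence_general n m f Li hLi L hL hdiff hlip K hK τ hτ F hF x g hg γ hγ hx μ
    hμ hμL hsc xs hgxs hγbar
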